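/- The real matrix (2δ_{ij} − c_{ij})_{i,j∈Ĩ} is symmetric (i.e. c_{ij} = c_{ji} for all i, j) and positive semidefinite: for every function x : Ĩ → ℝ one has Σ_{i,j∈Ĩ} x_i x_j (2δ_{ij} − c_{ij}) ≥ 0. -/

import Mathlib

/-! Write `t(g) = tr σ(g)`. Having finite order, `σ(g)` preserves the positive definite Hermitian
form `∑ₕ σ(h)ᴴ σ(h)`, so `tr σ(g⁻¹) = conj t(g)`; its eigenvalues are roots of unity, so
`|t(g)| ≤ 2`; and `det σ(g) = 1` gives `tr σ(g⁻¹) = t(g)`. Hence `t(g)` is real and at most `2`.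
Real `t` makes `c` symmetric, and by orthogonality of characters, with `χ_x = ∑ᵢ xᵢ χᵢ`,
`∑ᵢⱼ xᵢ xⱼ (2δᵢⱼ - cᵢⱼ) = |G|⁻¹ ∑_g (2 - t(g)) |χ_x(g)|² ≥ 0`. -/

open scoped BigOperators
open CategoryTheory Matrix
open scoped ComplexOrder ComplexConjugate MatrixGroups

namespace Matrix

variable {G N : Type*} [Group G] [Fintype G] [Fintype N] [DecidableEq N]

theorem posDef_sum_conjTranspose_mul_self (f : G →* Matrix N N ℂ) :
    (∑ h, (f h)ᴴ * f h).PosDef := by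
  classical
  rw [← Finset.add_sum_erase _ _ (Finset.mem_univ 1), map_one, conjTranspose_one, one_mul]
  exact PosDef.one.add_posSemidef
    (posSemidef_sum _ fun h _ => posSemidef_conjTranspose_mul_self _)

theorem conjTranspose_mul_sum_conjTranspose_mul_self_mul (f : G →* Matrix N N ℂ) (g : G) :
    (f g)ᴴ * (∑ h, (f h)ᴴ * f h) * f g = ∑ h, (f h)ᴴ * f h := by
  simp only [Finset.mul_sum, Finset.sum_mul]
  exact Fintype.sum_equiv (Equiv.mulRight g) _ _ fun h => by
    simp [Matrix.mul_assoc, conjTranspose_mul]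

theorem trace_map_inv (f : G →* Matrix N N ℂ) (g : G) :
    trace (f g⁻¹) = conj (trace (f g)) := by
  set Q := ∑ h, (f h)ᴴ * f h
  have hQ : IsUnit Q.det :=
    (isUnit_iff_isUnit_det Q).mp (posDef_sum_conjTranspose_mul_self f).isUnit
  have hconj : f g⁻¹ = Q⁻¹ * (f g)ᴴ * Q :=
    calc f g⁻¹ = Q⁻¹ * ((f g)ᴴ * Q * f g) * f g⁻¹ := by
          rw [conjTranspose_mul_sum_conjTranspose_mul_self_mul, nonsing_inv_mul _ hQ, one_mul]
      _ = Q⁻¹ * (f g)ᴴ * Q := by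
          simp only [Matrix.mul_assoc, ← map_mul, mul_inv_cancel, map_one, Matrix.mul_one]
  rw [hconj, trace_mul_cycle, mul_nonsing_inv _ hQ, Matrix.one_mul, trace_conjTranspose]
  rfl

theorem norm_eq_one_of_mem_roots_charpoly (f : G →* Matrix N N ℂ) (g : G) {μ : ℂ}
    (hμ : μ ∈ (f g).charpoly.roots) : ‖μ‖ = 1 := by
  have hspec : μ ^ Fintype.card G ∈ spectrum ℂ (f g ^ Fintype.card G) :=
    spectrum.pow_image_subset _ _
      ⟨μ, mem_spectrum_of_isRoot_charpoly (Polynomial.isRoot_of_mem_roots hμ), rfl⟩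
  rw [← map_pow, pow_card_eq_one, map_one] at hspec
  obtain hN | hN := subsingleton_or_nontrivial (Matrix N N ℂ)
  · simp [spectrum.of_subsingleton] at hspec
  rw [spectrum.one_eq, Set.mem_singleton_iff] at hspec
  exact Complex.norm_eq_one_of_pow_eq_one hspec Fintype.card_ne_zero

theorem norm_trace_map_le (f : G →* Matrix N N ℂ) (g : G) :
    ‖trace (f g)‖ ≤ Fintype.card N := by
  have hcard : Multiset.card (f g).charpoly.roots = Fintype.card N := by
    rw [Polynomial.splits_iff_card_roots.mp (IsAlgClosed.splits _), charpoly_natDegree_eq_dim]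
  calc ‖trace (f g)‖ = ‖(f g).charpoly.roots.sum‖ := by rw [trace_eq_sum_roots_charpoly]
    _ ≤ ((f g).charpoly.roots.map norm).sum := norm_multiset_sum_le _
    _ = Fintype.card N := by
      rw [Multiset.map_congr rfl fun μ hμ => norm_eq_one_of_mem_roots_charpoly f g hμ,
        Multiset.map_const', Multiset.sum_replicate, hcard, nsmul_one]

end Matrix

namespace FDRep

variable {G : Type*} [Group G] [Fintype G]

theorem char_inv_eq_conj (V : FDRep ℂ G) (g : G) : V.character g⁻¹ = conj (V.character g) := by
  let b := Module.finBasis ℂ V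
  let f : G →* Matrix _ _ ℂ := (LinearMap.toMatrixAlgEquiv b).toRingEquiv.toMonoidHom.comp V.ρ
  have hf : ∀ h, V.character h = trace (f h) := fun h =>
    LinearMap.trace_eq_matrix_trace ℂ b (V.ρ h)
  rw [hf, hf, trace_map_inv]

theorem card_inv_mul_sum_char_mul_conj_char {ι : Type*} [DecidableEq ι] (ρ : ι → FDRep ℂ G)
    [∀ i, Simple (ρ i)] (hdist : ∀ i j : ι, i ≠ j → IsEmpty (ρ i ≅ ρ j)) (i j : ι) :
    (Fintype.card G : ℂ)⁻¹ * ∑ g, (ρ i).character g * conj ((ρ j).character g) =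
      if i = j then 1 else 0 := by
  classical
  have : Invertible (Nat.card G : ℂ) := invertibleOfNonzero (Nat.cast_ne_zero.mpr Nat.card_pos.ne')
  simp only [← char_inv_eq_conj, ← Nat.card_eq_fintype_card]
  rw [char_orthonormal]
  rcases eq_or_ne i j with rfl | hij
  · rw [if_pos ⟨Iso.refl _⟩, if_pos rfl]
  · rw [if_neg (not_nonempty_iff.mpr (hdist i j hij)), if_neg hij]

end FDRep

namespace Matrix.SpecialLinearGroup

variable {G : Type*} [Group G] [Fintype G]

theorem trace_inv_fin_two {R : Type*} [CommRing R] (A : SL(2, R)) :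
    trace (A⁻¹ : SL(2, R)).1 = trace A.1 := by
  rw [coe_inv, adjugate_fin_two, trace_fin_two, trace_fin_two]
  simp [add_comm]

theorem conj_trace_map (φ : G →* SL(2, ℂ)) (g : G) :
    conj (trace (φ g).1) = trace (φ g).1 :=
  calc conj (trace (φ g).1) = trace (coeMonoidHom.comp φ g⁻¹) :=
        (trace_map_inv (coeMonoidHom.comp φ) g).symm
    _ = trace (φ g).1 := by
      rw [MonoidHom.comp_apply, map_inv, coeMonoidHom_apply, trace_inv_fin_two]

theorem trace_map_le_two (φ : G →* SL(2, ℂ)) (g : G) : trace (φ g).1 ≤ 2 := by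
  refine Complex.le_def.mpr ⟨?_, Complex.conj_eq_iff_im.mp (conj_trace_map φ g)⟩
  calc (trace (φ g).1).re ≤ ‖trace (coeMonoidHom.comp φ g)‖ := Complex.re_le_norm _
    _ ≤ 2 := by simpa using norm_trace_map_le (coeMonoidHom.comp φ) g

end Matrix.SpecialLinearGroup

theorem sum_sum_mul_mul_sum_mul_star {R ι G : Type*} [CommSemiring R] [StarRing R] [Fintype ι]
    [Fintype G] {x : ι → R} (hx : ∀ i, star (x i) = x i) (w : G → R) (χ : ι → G → R) :
    ∑ i, ∑ j, x i * x j * ∑ g, w g * χ i g * star (χ j g) =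
      ∑ g, w g * ((∑ i, x i * χ i g) * star (∑ i, x i * χ i g)) := by
  simp only [star_sum, star_mul', hx, Finset.sum_mul_sum]
  simp only [Finset.mul_sum]
  rw [Finset.sum_comm_cycle]
  exact Finset.sum_congr rfl fun g _ => Finset.sum_congr rfl fun i _ =>
    Finset.sum_congr rfl fun j _ => by ring

theorem stmt_3 {G : Type} [Group G] [Fintype G]
    (φ : G →* Matrix.SpecialLinearGroup (Fin 2) ℂ)
    {ι : Type} [Fintype ι] [DecidableEq ι]
    (ρ : ι → FDRep ℂ G) (hirr : ∀ i, Simple (ρ i))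
    (hdist : ∀ i j : ι, i ≠ j → IsEmpty (ρ i ≅ ρ j))
    (c : ι → ι → ℕ)
    (hc : ∀ i j, (c i j : ℂ) = (Fintype.card G : ℂ)⁻¹ *
      ∑ g : G, (ρ i).character g * Matrix.trace (φ g : Matrix (Fin 2) (Fin 2) ℂ) *
        (starRingEnd ℂ) ((ρ j).character g)) :
    (∀ i j, c i j = c j i) ∧
    (∀ x : ι → ℝ,
      0 ≤ ∑ i, ∑ j, x i * x j * (2 * (if i = j then 1 else 0) - (c i j : ℝ))) := by
  set t : G → ℂ := fun g => trace (φ g).1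
  refine ⟨fun i j => ?_, fun x => ?_⟩
  · have : (c i j : ℂ) = c j i := by
      rw [← Complex.conj_natCast (c i j), hc, hc, map_mul, map_inv₀, map_natCast, map_sum]
      refine congrArg _ (Finset.sum_congr rfl fun g _ => ?_)
      rw [map_mul, map_mul, Complex.conj_conj, SpecialLinearGroup.conj_trace_map]
      ring
    exact_mod_cast this
  have hentry : ∀ i j, (2 * (if i = j then 1 else 0) - (c i j : ℂ)) =
      ∑ g, ((Fintype.card G : ℂ)⁻¹ * (2 - t g)) * (ρ i).character g * star ((ρ j).character g) := by
    intro i j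
    rw [← FDRep.card_inv_mul_sum_char_mul_conj_char ρ hdist, hc]
    simp only [Finset.mul_sum, ← Finset.sum_sub_distrib, starRingEnd_apply]
    exact Finset.sum_congr rfl fun g _ => by ring
  rw [← Complex.zero_le_real]
  push_cast [apply_ite ((↑) : ℝ → ℂ)]
  simp only [hentry]
  rw [sum_sum_mul_mul_sum_mul_star fun i => Complex.conj_ofReal (x i)]
  refine Finset.sum_nonneg fun g _ => mul_nonneg (mul_nonneg ?_ ?_) (mul_star_self_nonneg _)
  · positivity
  · exact sub_nonneg.mpr (SpecialLinearGroup.trace_map_le_two φ g)
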